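/- arXiv:2102.03655 — 2 statements merged into one kernel-verified Lean document; each statement's English description precedes it below -/
import Mathlib

section
/- Let V be the free module over ℂ(t) with basis {S_j : j ∈ ℤ} subject to the identifications S_{-1} = 0 and S_{-j-2} = -S_j for all j (i.e., V has basis S_j, j ≥ 0). Define an action of symbols (p,q) on V by (p,q)·S_{j-1} = t^{-pq}(t^{2jq} S_{j-p-1} + t^{-2jq} S_{j+p-1}). Then this action is compatible with the product-to-sum formula: for all integers p,q,r,s and all j, t^{ps-qr}(p+r,q+s)·S_{j-1} + t^{qr-ps}(p-r,q-s)·S_{j-1} = (p,q)·((r,s)·S_{j-1}). -/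
/-- The result of the action of `(p,q)` on the basis element `S_{j-1}` of the
skein module of the solid torus: `(p,q)·S_{j-1} = t^{-pq}(t^{2jq} S_{j-p-1} + t^{-2jq} S_{j+p-1})`,
with `t = X ∈ ℂ(t) = RatFunc ℂ`. -/
noncomputable def rtAct {V : Type*} [AddCommGroup V] [Module (RatFunc ℂ) V]
    (S : ℤ → V) (p q j : ℤ) : V :=
  (RatFunc.X : RatFunc ℂ) ^ (-(p * q)) •
    ((RatFunc.X : RatFunc ℂ) ^ (2 * j * q) • S (j - p - 1) +
     (RatFunc.X : RatFunc ℂ) ^ (-(2 * j * q)) • S (j + p - 1))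

/-- The action is compatible with the product-to-sum formula:
`t^{ps-qr}(p+r,q+s)·S_{j-1} + t^{qr-ps}(p-r,q-s)·S_{j-1} = (p,q)·((r,s)·S_{j-1})`. -/
theorem stmt_8 {V : Type*} [AddCommGroup V] [Module (RatFunc ℂ) V]
    (S : ℤ → V) (hS1 : S (-1) = 0) (hS2 : ∀ j : ℤ, S (-j - 2) = -S j) :
    ∀ p q r s j : ℤ,
      (RatFunc.X : RatFunc ℂ) ^ (p * s - q * r) • rtAct S (p + r) (q + s) j +
        (RatFunc.X : RatFunc ℂ) ^ (q * r - p * s) • rtAct S (p - r) (q - s) j =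
      (RatFunc.X : RatFunc ℂ) ^ (-(r * s)) •
        ((RatFunc.X : RatFunc ℂ) ^ (2 * j * s) • rtAct S p q (j - r) +
         (RatFunc.X : RatFunc ℂ) ^ (-(2 * j * s)) • rtAct S p q (j + r)) := by
  intro p q r s j
  have hX : (RatFunc.X : RatFunc ℂ) ≠ 0 := RatFunc.X_ne_zero
  simp only [rtAct, smul_add, smul_smul, ← zpow_add₀ hX]
  ring_nf
  abel
end

section
/- Let t be a nonzero complex number and define operators on a ℂ-vector space with basis {ζ_j : j ∈ ℤ} by C(p,q)ζ_j = t^{-pq}(t^{2jq} ζ_{j-p} + t^{-2jq} ζ_{j+p}) for integers p, q. Then C(p,q)∘C(r,s) = t^{ps-qr} C(p+r, q+s) + t^{-(ps-qr)} C(p-r, q-s) as operators. -/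
/-- Weyl quantization operators: on a `ℂ`-vector space with basis `{ζ_j : j ∈ ℤ}`,
the operators `C(p,q)` defined by `C(p,q)ζ_j = t^{-pq}(t^{2jq} ζ_{j-p} + t^{-2jq} ζ_{j+p})`
satisfy the product-to-sum formula. -/
theorem stmt_14 {V : Type*} [AddCommGroup V] [Module ℂ V]
    (t : ℂ) (ht : t ≠ 0) (ζ : ℤ → V)
    (hindep : LinearIndependent ℂ ζ)
    (hspan : Submodule.span ℂ (Set.range ζ) = ⊤)
    (C : ℤ → ℤ → Module.End ℂ V)
    (hC : ∀ (p q j : ℤ),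
      C p q (ζ j) = t ^ (-(p * q)) • (t ^ (2 * j * q) • ζ (j - p) + t ^ (-(2 * j * q)) • ζ (j + p))) :
    ∀ p q r s : ℤ,
      C p q * C r s =
        t ^ (p * s - q * r) • C (p + r) (q + s) + t ^ (-(p * s - q * r)) • C (p - r) (q - s) := by
  intro p q r s
  apply LinearMap.ext_on_range hspan
  intro j
  simp only [Module.End.mul_apply, LinearMap.add_apply, LinearMap.smul_apply, hC, smul_add,
    map_add, map_smul, smul_smul, ← zpow_add₀ ht]
  rw [show j - r - p = j - (p + r) by ring, show j - r + p = j + (p - r) by ring,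
    show j + r - p = j - (p - r) by ring, show j + r + p = j + (p + r) by ring,
    show -(r * s) + 2 * j * s + (-(p * q) + 2 * (j - r) * q)
        = p * s - q * r + (-((p + r) * (q + s)) + 2 * j * (q + s)) by ring,
    show -(r * s) + 2 * j * s + (-(p * q) + -(2 * (j - r) * q))
        = -(p * s - q * r) + (-((p - r) * (q - s)) + -(2 * j * (q - s))) by ring,
    show -(r * s) + -(2 * j * s) + (-(p * q) + 2 * (j + r) * q)
        = -(p * s - q * r) + (-((p - r) * (q - s)) + 2 * j * (q - s)) by ring,
    show -(r * s) + -(2 * j * s) + (-(p * q) + -(2 * (j + r) * q))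
        = p * s - q * r + (-((p + r) * (q + s)) + -(2 * j * (q + s))) by ring]
  abel
end
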